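/- arXiv:1207.5591 — 2 statements merged into one kernel-verified Lean document; each statement's English description precedes it below -/
import Mathlib

section
/- Let u < 0 be fixed, δ ∈ (0, |u|/2), and let φ be a smooth function on the truncated cone C_u (0 ≤ u̲ ≤ δ) vanishing on S_{0,u}. Then |u|^{1/4} ‖φ‖_{L⁴(S_{u̲,u})} ≲ ‖Lφ‖_{L²(C_u)}^{1/2} ( ‖φ‖_{L²(C_u)}^{1/2} + |u|^{1/2} ‖∇̸φ‖_{L²(C_u)}^{1/2} ). -/
open MeasureTheory Set Function Real

set_option maxHeartbeats 1000000

lemma my_integrable_prod (f : ℝ → ℝ → ℝ) (hf : Continuous (Function.uncurry f))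
    (a b c d : ℝ) :
    Integrable (Function.uncurry f)
      ((volume.restrict (Ioc a b)).prod (volume.restrict (Ioc c d))) := by
  rw [Measure.prod_restrict]
  have h1 : IntegrableOn (Function.uncurry f) (Icc a b ×ˢ Icc c d) (volume.prod volume) :=
    hf.continuousOn.integrableOn_compact (isCompact_Icc.prod isCompact_Icc)
  exact h1.mono_set (Set.prod_mono Ioc_subset_Icc_self Ioc_subset_Icc_self)

lemma my_swap (f : ℝ → ℝ → ℝ) (hf : Continuous (Function.uncurry f))
    (a b c d : ℝ) (hab : a ≤ b) (hcd : c ≤ d) :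
    ∫ x in a..b, ∫ y in c..d, f x y = ∫ y in c..d, ∫ x in a..b, f x y := by
  rw [intervalIntegral.integral_of_le hab, intervalIntegral.integral_of_le hcd]
  simp_rw [intervalIntegral.integral_of_le hcd, intervalIntegral.integral_of_le hab]
  exact MeasureTheory.integral_integral_swap (my_integrable_prod f hf a b c d)

lemma circle_sup_bound (g g' : ℝ → ℝ) (hd : ∀ x, HasDerivAt g (g' x) x)
    (hg' : Continuous g') {θ : ℝ} (hθ : θ ∈ Icc 0 (2 * π)) :
    g θ ^ 2 ≤ (1 / (2 * π)) * (∫ x in (0:ℝ)..(2 * π), g x ^ 2)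
      + ∫ x in (0:ℝ)..(2 * π), (g x ^ 2 + g' x ^ 2) := by
  have hπ : (0:ℝ) < 2 * π := by positivity
  have hg : Continuous g := by
    rw [continuous_iff_continuousAt]; exact fun x => (hd x).continuousAt
  obtain ⟨θ₀, hθ₀, hmin⟩ := isCompact_Icc.exists_isMinOn (f := fun x => g x ^ 2)
    ⟨0, by constructor <;> [rfl; positivity]⟩ (hg.pow 2).continuousOn
  have hIg2 : IntervalIntegrable (fun x => g x ^ 2) volume 0 (2 * π) :=
    ((hg.pow 2)).intervalIntegrable _ _
  have h1 : 2 * π * g θ₀ ^ 2 ≤ ∫ x in (0:ℝ)..(2 * π), g x ^ 2 := by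
    have := intervalIntegral.integral_mono_on (μ := volume) hπ.le
      (_root_.intervalIntegrable_const (c := g θ₀ ^ 2)) hIg2 (fun x hx => hmin hx)
    simpa [mul_comm] using this
  have hder : ∀ x : ℝ, HasDerivAt (fun y => g y ^ 2) (2 * g x * g' x) x := by
    intro x
    have := (hd x).fun_pow 2
    simpa using this
  have hint : ∀ a b : ℝ, IntervalIntegrable (fun x => 2 * g x * g' x) volume a b :=
    fun a b => ((continuous_const.mul hg).mul hg').intervalIntegrable _ _
  have h2 : g θ ^ 2 - g θ₀ ^ 2 = ∫ x in θ₀..θ, 2 * g x * g' x :=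
    (intervalIntegral.integral_eq_sub_of_hasDerivAt (fun x _ => hder x) (hint _ _)).symm
  have habs : ∀ x, |2 * g x * g' x| ≤ g x ^ 2 + g' x ^ 2 := by
    intro x
    rw [abs_mul, abs_mul, abs_two]
    nlinarith [sq_nonneg (|g x| - |g' x|), sq_abs (g x), sq_abs (g' x), abs_nonneg (g x),
      abs_nonneg (g' x)]
  have h3 : |∫ x in θ₀..θ, 2 * g x * g' x| ≤ ∫ x in (0:ℝ)..(2*π), |2 * g x * g' x| := by
    have hai : IntervalIntegrable (fun x => |2 * g x * g' x|) volume 0 (2*π) :=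
      (((continuous_const.mul hg).mul hg').abs).intervalIntegrable _ _
    have hnn : 0 ≤ᵐ[volume.restrict (Ioc (0:ℝ) (2*π))] fun x => |2 * g x * g' x| :=
      Filter.Eventually.of_forall (fun x => abs_nonneg _)
    rcases le_total θ₀ θ with h | h
    · calc |∫ x in θ₀..θ, 2 * g x * g' x| ≤ ∫ x in θ₀..θ, |2 * g x * g' x| :=
            intervalIntegral.abs_integral_le_integral_abs h
        _ ≤ _ := intervalIntegral.integral_mono_interval hθ₀.1 h hθ.2 hnn hai
    · rw [intervalIntegral.integral_symm, abs_neg]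
      calc |∫ x in θ..θ₀, 2 * g x * g' x| ≤ ∫ x in θ..θ₀, |2 * g x * g' x| :=
            intervalIntegral.abs_integral_le_integral_abs h
        _ ≤ _ := intervalIntegral.integral_mono_interval hθ.1 h hθ₀.2 hnn hai
  have h4 : (∫ x in (0:ℝ)..(2*π), |2 * g x * g' x|)
      ≤ ∫ x in (0:ℝ)..(2*π), (g x ^ 2 + g' x ^ 2) :=
    intervalIntegral.integral_mono_on hπ.le
      ((((continuous_const.mul hg).mul hg').abs).intervalIntegrable _ _)
      (((hg.pow 2).add (hg'.pow 2)).intervalIntegrable _ _)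
      (fun x _ => habs x)
  have h5 : g θ₀ ^ 2 ≤ (1 / (2 * π)) * ∫ x in (0:ℝ)..(2 * π), g x ^ 2 := by
    rw [one_div, mul_comm, ← div_eq_mul_inv, le_div_iff₀ hπ]
    nlinarith [h1]
  nlinarith [le_abs_self (∫ x in θ₀..θ, 2 * g x * g' x), h2, h3, h4, h5]

open intervalIntegral

/-- L⁴ Sobolev inequality on the truncated outgoing cone `C_u` (Proposition 3.1). -/
theorem cone_L4_sobolev :
    ∃ C : ℝ, 0 < C ∧ ∀ (u δ : ℝ), u < 0 → 0 < δ → δ < |u| / 2 →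
      ∀ φ : ℝ → ℝ → ℝ,
        ContDiff ℝ (⊤ : ℕ∞) (fun p : ℝ × ℝ => φ p.1 p.2) →
        (∀ b, Function.Periodic (fun θ => φ b θ) (2 * Real.pi)) →
        (∀ θ, φ 0 θ = 0) →
        ∀ ub ∈ Set.Icc (0 : ℝ) δ,
          |u| ^ ((1 : ℝ) / 4) *
              (∫ θ in (0 : ℝ)..(2 * Real.pi), φ ub θ ^ 4 * (ub - u)) ^ ((1 : ℝ) / 4) ≤
            C * (Real.sqrt (∫ b in (0 : ℝ)..δ, ∫ θ in (0 : ℝ)..(2 * Real.pi),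
                  (deriv (fun s => φ s θ) b) ^ 2 * (b - u))) ^ ((1 : ℝ) / 2) *
              ((Real.sqrt (∫ b in (0 : ℝ)..δ, ∫ θ in (0 : ℝ)..(2 * Real.pi),
                    φ b θ ^ 2 * (b - u))) ^ ((1 : ℝ) / 2) +
                |u| ^ ((1 : ℝ) / 2) *
                  (Real.sqrt (∫ b in (0 : ℝ)..δ, ∫ θ in (0 : ℝ)..(2 * Real.pi),
                    ((b - u)⁻¹ * deriv (fun t => φ b t) θ) ^ 2 * (b - u))) ^ ((1 : ℝ) / 2)) := by
  refine ⟨4, by norm_num, ?_⟩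
  intro u δ hu hδ hδu φ hφ hper h0 ub hub
  have hπ : (0:ℝ) < π := Real.pi_pos
  have h2π : (0:ℝ) < 2 * π := by positivity
  have habsu : |u| = -u := abs_of_neg hu
  have hu' : (0:ℝ) < -u := by linarith
  rw [habsu] at hδu
  -- partial derivatives
  set Φ : ℝ × ℝ → ℝ := fun p => φ p.1 p.2 with hΦdef
  have hφc : Continuous Φ := hφ.continuous
  set P1 : ℝ → ℝ → ℝ := fun b θ => fderiv ℝ Φ (b, θ) (1, 0) with hP1def
  set P2 : ℝ → ℝ → ℝ := fun b θ => fderiv ℝ Φ (b, θ) (0, 1) with hP2def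
  have hP1c : Continuous (fun p : ℝ × ℝ => P1 p.1 p.2) :=
    (hφ.continuous_fderiv (by simp)).clm_apply continuous_const
  have hP2c : Continuous (fun p : ℝ × ℝ => P2 p.1 p.2) :=
    (hφ.continuous_fderiv (by simp)).clm_apply continuous_const
  have hd1 : ∀ b θ : ℝ, HasDerivAt (fun s => φ s θ) (P1 b θ) b := by
    intro b θ
    have h := (hφ.differentiable (by simp) (b, θ)).hasFDerivAt
    have hline : HasDerivAt (fun s : ℝ => ((s, θ) : ℝ × ℝ)) ((1:ℝ), (0:ℝ)) b :=
      (hasDerivAt_id b).prodMk (hasDerivAt_const b θ)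
    exact h.comp_hasDerivAt b hline
  have hd2 : ∀ b θ : ℝ, HasDerivAt (fun t => φ b t) (P2 b θ) θ := by
    intro b θ
    have h := (hφ.differentiable (by simp) (b, θ)).hasFDerivAt
    have hline : HasDerivAt (fun t : ℝ => ((b, t) : ℝ × ℝ)) ((0:ℝ), (1:ℝ)) θ :=
      (hasDerivAt_const θ b).prodMk (hasDerivAt_id θ)
    exact h.comp_hasDerivAt θ hline
  have hde1 : ∀ θ b : ℝ, deriv (fun s => φ s θ) b = P1 b θ := fun θ b => (hd1 b θ).deriv
  have hde2 : ∀ b θ : ℝ, deriv (fun t => φ b t) θ = P2 b θ := fun b θ => (hd2 b θ).deriv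
  simp_rw [hde1, hde2, habsu]
  -- names for the main quantities
  set F : ℝ → ℝ := fun s => ∫ θ in (0:ℝ)..(2 * π), φ s θ ^ 4 * (s - u) with hFdef
  set GA : ℝ → ℝ := fun b => ∫ θ in (0:ℝ)..(2 * π), (P1 b θ) ^ 2 * (b - u) with hGAdef
  set G2 : ℝ → ℝ := fun b => ∫ θ in (0:ℝ)..(2 * π), φ b θ ^ 2 * (b - u) with hG2def
  set GD : ℝ → ℝ := fun b => ∫ θ in (0:ℝ)..(2 * π), ((b - u)⁻¹ * P2 b θ) ^ 2 * (b - u)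
    with hGDdef
  set G6 : ℝ → ℝ := fun b => ∫ θ in (0:ℝ)..(2 * π), φ b θ ^ 6 * (b - u) with hG6def
  set G4 : ℝ → ℝ := fun b => ∫ θ in (0:ℝ)..(2 * π), φ b θ ^ 4 with hG4def
  set Gh : ℝ → ℝ := fun b => ∫ θ in (0:ℝ)..(2 * π),
    (4 * φ b θ ^ 3 * P1 b θ * (b - u) + φ b θ ^ 4) with hGhdef
  set A := ∫ b in (0:ℝ)..δ, GA b with hAdef
  set B := ∫ b in (0:ℝ)..δ, G2 b with hBdef
  set D := ∫ b in (0:ℝ)..δ, GD b with hDdef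
  -- basic radius bounds
  have hr_lb : ∀ b ∈ Icc (0:ℝ) δ, -u ≤ b - u := fun b hb => by linarith [hb.1]
  have hr_pos : ∀ b ∈ Icc (0:ℝ) δ, 0 < b - u := fun b hb => lt_of_lt_of_le hu' (hr_lb b hb)
  have hr_ub : ∀ b ∈ Icc (0:ℝ) δ, b - u ≤ 3 / 2 * (-u) := fun b hb => by
    have := hb.2; linarith
  -- continuity of everything
  have hcF : Continuous fun p : ℝ × ℝ => φ p.1 p.2 ^ 4 * (p.1 - u) :=
    (hφc.pow 4).mul (continuous_fst.sub continuous_const)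
  have hcGA : Continuous fun p : ℝ × ℝ => (P1 p.1 p.2) ^ 2 * (p.1 - u) :=
    (hP1c.pow 2).mul (continuous_fst.sub continuous_const)
  have hcG2 : Continuous fun p : ℝ × ℝ => φ p.1 p.2 ^ 2 * (p.1 - u) :=
    (hφc.pow 2).mul (continuous_fst.sub continuous_const)
  have hcW : Continuous fun p : ℝ × ℝ => (P2 p.1 p.2) ^ 2 := hP2c.pow 2
  have hcG6 : Continuous fun p : ℝ × ℝ => φ p.1 p.2 ^ 6 * (p.1 - u) :=
    (hφc.pow 6).mul (continuous_fst.sub continuous_const)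
  have hcG4 : Continuous fun p : ℝ × ℝ => φ p.1 p.2 ^ 4 := hφc.pow 4
  have hcGh : Continuous fun p : ℝ × ℝ =>
      4 * φ p.1 p.2 ^ 3 * P1 p.1 p.2 * (p.1 - u) + φ p.1 p.2 ^ 4 :=
    ((((continuous_const.mul (hφc.pow 3)).mul hP1c).mul
      (continuous_fst.sub continuous_const))).add (hφc.pow 4)
  -- parametric continuity of the inner integrals
  have hFcont : Continuous F :=
    intervalIntegral.continuous_parametric_intervalIntegral_of_continuous'
      (f := fun s θ => φ s θ ^ 4 * (s - u)) hcF 0 (2 * π)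
  have hGAcont : Continuous GA :=
    intervalIntegral.continuous_parametric_intervalIntegral_of_continuous'
      (f := fun b θ => (P1 b θ) ^ 2 * (b - u)) hcGA 0 (2 * π)
  have hG2cont : Continuous G2 :=
    intervalIntegral.continuous_parametric_intervalIntegral_of_continuous'
      (f := fun b θ => φ b θ ^ 2 * (b - u)) hcG2 0 (2 * π)
  have hG6cont : Continuous G6 :=
    intervalIntegral.continuous_parametric_intervalIntegral_of_continuous'
      (f := fun b θ => φ b θ ^ 6 * (b - u)) hcG6 0 (2 * π)
  have hG4cont : Continuous G4 :=
    intervalIntegral.continuous_parametric_intervalIntegral_of_continuous'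
      (f := fun b θ => φ b θ ^ 4) hcG4 0 (2 * π)
  have hGhcont : Continuous Gh :=
    intervalIntegral.continuous_parametric_intervalIntegral_of_continuous'
      (f := fun b θ => 4 * φ b θ ^ 3 * P1 b θ * (b - u) + φ b θ ^ 4) hcGh 0 (2 * π)
  set W : ℝ → ℝ := fun b => ∫ θ in (0:ℝ)..(2 * π), (P2 b θ) ^ 2 with hWdef
  have hWcont : Continuous W :=
    intervalIntegral.continuous_parametric_intervalIntegral_of_continuous'
      (f := fun b θ => (P2 b θ) ^ 2) hcW 0 (2 * π)
  have hGDeq : ∀ b : ℝ, GD b = (((b - u)⁻¹) ^ 2 * (b - u)) * W b := by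
    intro b
    rw [hGDdef, hWdef]
    simp only
    rw [← intervalIntegral.integral_const_mul]
    congr 1
    funext θ
    ring
  have hGDconton : ContinuousOn GD (Icc 0 δ) := by
    have : ContinuousOn (fun b : ℝ => (((b - u)⁻¹) ^ 2 * (b - u)) * W b) (Icc 0 δ) := by
      apply ContinuousOn.mul _ hWcont.continuousOn
      apply ContinuousOn.mul _ ((continuousOn_id.sub continuousOn_const))
      exact ((continuousOn_id.sub continuousOn_const).inv₀
        (fun b hb => (hr_pos b hb).ne')).pow 2
    exact this.congr (fun b _ => hGDeq b)
  have hGDint : IntervalIntegrable GD volume 0 δ := by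
    apply ContinuousOn.intervalIntegrable
    rwa [uIcc_of_le hδ.le]
  -- nonnegativity facts
  have hWnn : ∀ b : ℝ, 0 ≤ W b :=
    fun b => intervalIntegral.integral_nonneg h2π.le (fun θ _ => sq_nonneg _)
  have hF_nn : ∀ b ∈ Icc (0:ℝ) δ, 0 ≤ F b := fun b hb =>
    intervalIntegral.integral_nonneg h2π.le
      (fun θ _ => mul_nonneg (by positivity) (hr_pos b hb).le)
  have hGA_nn : ∀ b ∈ Icc (0:ℝ) δ, 0 ≤ GA b := fun b hb =>
    intervalIntegral.integral_nonneg h2π.le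
      (fun θ _ => mul_nonneg (sq_nonneg _) (hr_pos b hb).le)
  have hG2_nn : ∀ b ∈ Icc (0:ℝ) δ, 0 ≤ G2 b := fun b hb =>
    intervalIntegral.integral_nonneg h2π.le
      (fun θ _ => mul_nonneg (sq_nonneg _) (hr_pos b hb).le)
  have hG6_nn : ∀ b ∈ Icc (0:ℝ) δ, 0 ≤ G6 b := fun b hb =>
    intervalIntegral.integral_nonneg h2π.le
      (fun θ _ => mul_nonneg (by positivity) (hr_pos b hb).le)
  have hGD_nn : ∀ b ∈ Icc (0:ℝ) δ, 0 ≤ GD b := fun b hb => by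
    rw [hGDeq b]
    exact mul_nonneg (mul_nonneg (sq_nonneg _) (hr_pos b hb).le) (hWnn b)
  have hA_nn : (0:ℝ) ≤ A :=
    intervalIntegral.integral_nonneg hδ.le hGA_nn
  have hB_nn : (0:ℝ) ≤ B :=
    intervalIntegral.integral_nonneg hδ.le hG2_nn
  have hD_nn : (0:ℝ) ≤ D :=
    intervalIntegral.integral_nonneg hδ.le hGD_nn
  -- FTC in the b-direction
  have hFTC : ∀ s θ : ℝ, φ s θ ^ 4 * (s - u)
      = ∫ b in (0:ℝ)..s, (4 * φ b θ ^ 3 * P1 b θ * (b - u) + φ b θ ^ 4) := by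
    intro s θ
    have hderiv : ∀ x : ℝ, HasDerivAt (fun b => φ b θ ^ 4 * (b - u))
        (4 * φ x θ ^ 3 * P1 x θ * (x - u) + φ x θ ^ 4) x := by
      intro x
      have h1 := (hd1 x θ).fun_pow 4
      have h2 : HasDerivAt (fun b : ℝ => b - u) 1 x := (hasDerivAt_id x).sub_const u
      have h3 := h1.fun_mul h2
      refine h3.congr_deriv ?_
      norm_num
    have hslice : Continuous fun b : ℝ => 4 * φ b θ ^ 3 * P1 b θ * (b - u) + φ b θ ^ 4 :=
      hcGh.comp (continuous_id.prodMk continuous_const)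
    have := intervalIntegral.integral_eq_sub_of_hasDerivAt
      (f := fun b => φ b θ ^ 4 * (b - u)) (fun x _ => hderiv x)
      (hslice.intervalIntegrable 0 s)
    rw [this]
    simp only [h0]
    ring
  -- Fubini representation of F
  have hFrep : ∀ s, 0 ≤ s → F s = ∫ b in (0:ℝ)..s, Gh b := by
    intro s hs
    have h1 : F s = ∫ θ in (0:ℝ)..(2 * π),
        ∫ b in (0:ℝ)..s, (4 * φ b θ ^ 3 * P1 b θ * (b - u) + φ b θ ^ 4) := by
      rw [hFdef]
      simp only
      congr 1
      funext θ
      exact hFTC s θ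
    rw [h1]
    have hswap := my_swap (fun θ b => 4 * φ b θ ^ 3 * P1 b θ * (b - u) + φ b θ ^ 4)
      (hcGh.comp (continuous_snd.prodMk continuous_fst)) 0 (2 * π) 0 s h2π.le hs
    rw [hswap]
  -- the sup of F on [0, δ]
  set S := sSup (F '' Icc 0 δ) with hSdef
  have hbdd : BddAbove (F '' Icc 0 δ) := (isCompact_Icc.image hFcont).bddAbove
  have hFS : ∀ s ∈ Icc (0:ℝ) δ, F s ≤ S :=
    fun s hs => le_csSup hbdd (mem_image_of_mem F hs)
  have hF0 : F 0 = 0 := by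
    rw [hFdef]
    simp [h0]
  have hS_nn : (0:ℝ) ≤ S := by
    rw [← hF0]
    exact hFS 0 ⟨le_refl 0, hδ.le⟩
  set K : ℝ := 2 * (-u)⁻¹ * B + 2 * (-u) * D with hKdef
  have hK_nn : 0 ≤ K := by
    rw [hKdef]
    have h1 : (0:ℝ) ≤ 2 * (-u)⁻¹ * B := by positivity
    have h2 : (0:ℝ) ≤ 2 * (-u) * D := by positivity
    linarith
  -- slice continuity helpers
  have hsliceθ : ∀ (f : ℝ × ℝ → ℝ), Continuous f → ∀ b : ℝ, Continuous fun θ => f (b, θ) :=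
    fun f hf b => hf.comp (continuous_const.prodMk continuous_id)
  -- main estimate
  have hmain : ∀ ε : ℝ, 0 < ε → ∀ s ∈ Icc (0:ℝ) δ,
      F s ≤ ε * (S * K) + 4 / ε * A + S / 2 := by
    intro ε hε s hs
    have hsub : Icc (0:ℝ) s ⊆ Icc 0 δ := Icc_subset_Icc le_rfl hs.2
    have hGDs : IntervalIntegrable GD volume 0 s := by
      apply hGDint.mono_set
      rw [uIcc_of_le hs.1, uIcc_of_le hδ.le]
      exact Icc_subset_Icc le_rfl hs.2
    have hmono : ∀ (g : ℝ → ℝ), IntervalIntegrable g volume 0 δ →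
        (∀ b ∈ Icc (0:ℝ) δ, 0 ≤ g b) →
        (∫ b in (0:ℝ)..s, g b) ≤ ∫ b in (0:ℝ)..δ, g b := by
      intro g hgi hgn
      refine intervalIntegral.integral_mono_interval le_rfl hs.1 hs.2 ?_ hgi
      exact (ae_restrict_iff' measurableSet_Ioc).mpr
        (Filter.Eventually.of_forall (fun b hb => hgn b (Ioc_subset_Icc_self hb)))
    -- step a : pointwise bound on Gh
    have step_a : ∀ b ∈ Icc (0:ℝ) s,
        Gh b ≤ ε * G6 b + 4 / ε * GA b + G4 b := by
      intro b hb
      have hbu := hr_pos b (hsub hb)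
      have hptwise : ∀ θ ∈ Icc (0:ℝ) (2 * π),
          4 * φ b θ ^ 3 * P1 b θ * (b - u) + φ b θ ^ 4
          ≤ ε * (φ b θ ^ 6 * (b - u)) + 4 / ε * (P1 b θ ^ 2 * (b - u)) + φ b θ ^ 4 := by
        intro θ _
        have hexp : (ε * φ b θ ^ 3 - 2 * P1 b θ) ^ 2 / ε
            = ε * φ b θ ^ 6 - 4 * φ b θ ^ 3 * P1 b θ + 4 / ε * P1 b θ ^ 2 := by
          field_simp
          ring
        have hkey : 4 * φ b θ ^ 3 * P1 b θ ≤ ε * φ b θ ^ 6 + 4 / ε * P1 b θ ^ 2 := by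
          have h := div_nonneg (sq_nonneg (ε * φ b θ ^ 3 - 2 * P1 b θ)) hε.le
          rw [hexp] at h
          linarith
        have hkey2 := mul_le_mul_of_nonneg_right hkey hbu.le
        nlinarith [hkey2]
      have h1 : Gh b ≤ ∫ θ in (0:ℝ)..(2 * π),
          (ε * (φ b θ ^ 6 * (b - u)) + 4 / ε * (P1 b θ ^ 2 * (b - u)) + φ b θ ^ 4) := by
        refine intervalIntegral.integral_mono_on h2π.le
          ((hsliceθ _ hcGh b).intervalIntegrable 0 (2 * π)) ?_ hptwise
        exact ((((continuous_const.mul (hsliceθ _ hcG6 b) : Continuous fun θ => ε * (φ b θ ^ 6 * (b - u)))).add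
          ((continuous_const.mul (hsliceθ _ hcGA b) : Continuous fun θ => 4 / ε * (P1 b θ ^ 2 * (b - u))))).add (hsliceθ _ hcG4 b)).intervalIntegrable 0 (2 * π)
      have h2 : (∫ θ in (0:ℝ)..(2 * π),
          (ε * (φ b θ ^ 6 * (b - u)) + 4 / ε * (P1 b θ ^ 2 * (b - u)) + φ b θ ^ 4))
          = ε * G6 b + 4 / ε * GA b + G4 b := by
        rw [intervalIntegral.integral_add, intervalIntegral.integral_add,
          intervalIntegral.integral_const_mul, intervalIntegral.integral_const_mul]
        · exact ((continuous_const.mul (hsliceθ _ hcG6 b) : Continuous fun θ => ε * (φ b θ ^ 6 * (b - u)))).intervalIntegrable 0 (2 * π)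
        · exact ((continuous_const.mul (hsliceθ _ hcGA b) : Continuous fun θ => 4 / ε * (P1 b θ ^ 2 * (b - u)))).intervalIntegrable 0 (2 * π)
        · exact (((continuous_const.mul (hsliceθ _ hcG6 b) : Continuous fun θ => ε * (φ b θ ^ 6 * (b - u)))).add
            ((continuous_const.mul (hsliceθ _ hcGA b) : Continuous fun θ => 4 / ε * (P1 b θ ^ 2 * (b - u))))).intervalIntegrable 0 (2 * π)
        · exact (hsliceθ _ hcG4 b).intervalIntegrable 0 (2 * π)
      rw [h2] at h1
      exact h1
    -- integrate the pointwise bound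
    have step_b : F s ≤ ε * (∫ b in (0:ℝ)..s, G6 b) + 4 / ε * (∫ b in (0:ℝ)..s, GA b)
        + (∫ b in (0:ℝ)..s, G4 b) := by
      rw [hFrep s hs.1]
      have hm := intervalIntegral.integral_mono_on (μ := volume) hs.1
        (hGhcont.intervalIntegrable 0 s)
        (((((continuous_const.fun_mul hG6cont : Continuous fun b => ε * G6 b)).fun_add ((continuous_const.fun_mul hGAcont : Continuous fun b => 4 / ε * GA b))).fun_add
          hG4cont).intervalIntegrable 0 s) step_a
      have hsplit : (∫ b in (0:ℝ)..s, (ε * G6 b + 4 / ε * GA b + G4 b))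
          = ε * (∫ b in (0:ℝ)..s, G6 b) + 4 / ε * (∫ b in (0:ℝ)..s, GA b)
            + (∫ b in (0:ℝ)..s, G4 b) := by
        rw [intervalIntegral.integral_add ((((continuous_const.fun_mul hG6cont : Continuous fun b => ε * G6 b)).fun_add
            ((continuous_const.fun_mul hGAcont : Continuous fun b => 4 / ε * GA b))).intervalIntegrable 0 s)
            (hG4cont.intervalIntegrable 0 s),
          intervalIntegral.integral_add (((continuous_const.fun_mul hG6cont : Continuous fun b => ε * G6 b)).intervalIntegrable 0 s)
            (((continuous_const.fun_mul hGAcont : Continuous fun b => 4 / ε * GA b)).intervalIntegrable 0 s),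
          intervalIntegral.integral_const_mul, intervalIntegral.integral_const_mul]
      rw [hsplit] at hm
      exact hm
    -- step e : the φ⁴ term
    have step_e : (∫ b in (0:ℝ)..s, G4 b) ≤ S / 2 := by
      have hG4b : ∀ b ∈ Icc (0:ℝ) s, G4 b ≤ (-u)⁻¹ * S := by
        intro b hb
        have hbu := hr_pos b (hsub hb)
        have heq : G4 b = (b - u)⁻¹ * F b := by
          rw [hG4def, hFdef]
          simp only
          rw [← intervalIntegral.integral_const_mul]
          congr 1
          funext θ
          field_simp
        rw [heq]
        have h1 : (b - u)⁻¹ ≤ (-u)⁻¹ := by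
          apply inv_anti₀ hu' (hr_lb b (hsub hb))
        exact mul_le_mul h1 (hFS b (hsub hb)) (hF_nn b (hsub hb)) (by positivity)
      have h2 : (∫ b in (0:ℝ)..s, G4 b) ≤ ∫ b in (0:ℝ)..s, (-u)⁻¹ * S :=
        intervalIntegral.integral_mono_on hs.1 (hG4cont.intervalIntegrable 0 s)
          intervalIntegrable_const hG4b
      have h3 : (∫ b in (0:ℝ)..s, (-u)⁻¹ * S) = s * ((-u)⁻¹ * S) := by
        rw [intervalIntegral.integral_const]
        simp
      have h4 : s * ((-u)⁻¹ * S) ≤ (-u / 2) * ((-u)⁻¹ * S) := by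
        apply mul_le_mul_of_nonneg_right _ (by positivity)
        linarith [hs.2]
      have h5 : (-u / 2) * ((-u)⁻¹ * S) = S / 2 := by
        rw [div_mul_eq_mul_div, ← mul_assoc, mul_inv_cancel₀ hu'.ne', one_mul]
      linarith
    -- step f : the φ⁶ term
    have step_f : (∫ b in (0:ℝ)..s, G6 b) ≤ S * K := by
      have hptf : ∀ b ∈ Icc (0:ℝ) s,
          G6 b ≤ (2 * (-u)⁻¹ * S) * G2 b + (2 * (-u) * S) * GD b := by
        intro b hb
        have hb' := hsub hb
        have hbu := hr_pos b hb'
        set Mb : ℝ := 1 / (2 * π) * (∫ θ in (0:ℝ)..(2 * π), φ b θ ^ 2)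
          + ∫ θ in (0:ℝ)..(2 * π), (φ b θ ^ 2 + P2 b θ ^ 2) with hMbdef
        have hcb : ∀ θ ∈ Icc (0:ℝ) (2 * π), φ b θ ^ 2 ≤ Mb := by
          intro θ hθ
          exact circle_sup_bound (fun t => φ b t) (fun t => P2 b t) (hd2 b)
            (hsliceθ _ hP2c b) hθ
        have hMb_nn : 0 ≤ Mb := le_trans (sq_nonneg (φ b 0)) (hcb 0 ⟨le_rfl, h2π.le⟩)
        -- G6 b ≤ Mb * F b
        have h6 : G6 b ≤ Mb * F b := by
          have hpt : ∀ θ ∈ Icc (0:ℝ) (2 * π),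
              φ b θ ^ 6 * (b - u) ≤ Mb * (φ b θ ^ 4 * (b - u)) := by
            intro θ hθ
            calc φ b θ ^ 6 * (b - u) = φ b θ ^ 2 * (φ b θ ^ 4 * (b - u)) := by ring
              _ ≤ Mb * (φ b θ ^ 4 * (b - u)) := by
                  apply mul_le_mul_of_nonneg_right (hcb θ hθ)
                  exact mul_nonneg (by positivity) hbu.le
          have := intervalIntegral.integral_mono_on (μ := volume) h2π.le
            ((hsliceθ _ hcG6 b).intervalIntegrable 0 (2 * π))
            (((continuous_const.fun_mul (hsliceθ _ hcF b) : Continuous fun θ => Mb * (φ b θ ^ 4 * (b - u)))).intervalIntegrable 0 (2 * π)) hpt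
          rwa [intervalIntegral.integral_const_mul] at this
        -- circle L² bounds
        have hI2 : (∫ θ in (0:ℝ)..(2 * π), φ b θ ^ 2) ≤ (-u)⁻¹ * G2 b := by
          have hpt : ∀ θ ∈ Icc (0:ℝ) (2 * π),
              φ b θ ^ 2 ≤ (-u)⁻¹ * (φ b θ ^ 2 * (b - u)) := by
            intro θ _
            rw [inv_mul_eq_div, le_div_iff₀ hu']
            nlinarith [sq_nonneg (φ b θ), hr_lb b hb']
          have := intervalIntegral.integral_mono_on (μ := volume) h2π.le
            (((hsliceθ _ hφc b).pow 2).intervalIntegrable 0 (2 * π))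
            (((continuous_const.fun_mul (hsliceθ _ hcG2 b) : Continuous fun θ => (-u)⁻¹ * (φ b θ ^ 2 * (b - u)))).intervalIntegrable 0 (2 * π)) hpt
          rwa [intervalIntegral.integral_const_mul] at this
        have hID : W b ≤ 3 / 2 * (-u) * GD b := by
          rw [hGDeq b]
          have h1 : 1 ≤ 3 / 2 * (-u) * (b - u)⁻¹ := by
            rw [← div_eq_mul_inv, le_div_iff₀ hbu]
            linarith [hr_ub b hb']
          have he : (b - u)⁻¹ ^ 2 * (b - u) = (b - u)⁻¹ := by
            field_simp
          rw [he]
          nlinarith [mul_le_mul_of_nonneg_right h1 (hWnn b)]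
        have hadd : (∫ θ in (0:ℝ)..(2 * π), (φ b θ ^ 2 + P2 b θ ^ 2))
            = (∫ θ in (0:ℝ)..(2 * π), φ b θ ^ 2) + W b := by
          rw [hWdef]
          exact intervalIntegral.integral_add
            (((hsliceθ _ hφc b).pow 2).intervalIntegrable 0 (2 * π))
            (((hsliceθ _ hP2c b).pow 2).intervalIntegrable 0 (2 * π))
        have hMb_le : Mb ≤ 2 * (-u)⁻¹ * G2 b + 2 * (-u) * GD b := by
          have hc1 : 1 / (2 * π) ≤ 1 := by
            rw [div_le_one h2π]
            nlinarith [Real.pi_gt_three]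
          have hI2' : (0:ℝ) ≤ ∫ θ in (0:ℝ)..(2 * π), φ b θ ^ 2 :=
            intervalIntegral.integral_nonneg h2π.le (fun θ _ => sq_nonneg _)
          have hb1 : 1 / (2 * π) * (∫ θ in (0:ℝ)..(2 * π), φ b θ ^ 2)
              ≤ (-u)⁻¹ * G2 b := by
            calc 1 / (2 * π) * (∫ θ in (0:ℝ)..(2 * π), φ b θ ^ 2)
                ≤ 1 * (∫ θ in (0:ℝ)..(2 * π), φ b θ ^ 2) :=
                  mul_le_mul_of_nonneg_right hc1 hI2'
              _ = ∫ θ in (0:ℝ)..(2 * π), φ b θ ^ 2 := by ring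
              _ ≤ (-u)⁻¹ * G2 b := hI2
          rw [hMbdef, hadd]
          have hgd := hGD_nn b hb'
          nlinarith [hb1, hI2, hID, hu']
        have hrhs_nn : 0 ≤ 2 * (-u)⁻¹ * G2 b + 2 * (-u) * GD b := by
          have := hG2_nn b hb'
          have := hGD_nn b hb'
          positivity
        calc G6 b ≤ Mb * F b := h6
          _ ≤ (2 * (-u)⁻¹ * G2 b + 2 * (-u) * GD b) * S :=
              mul_le_mul hMb_le (hFS b hb') (hF_nn b hb') hrhs_nn
          _ = (2 * (-u)⁻¹ * S) * G2 b + (2 * (-u) * S) * GD b := by ring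
      have hstep1 : (∫ b in (0:ℝ)..s, G6 b)
          ≤ ∫ b in (0:ℝ)..s, ((2 * (-u)⁻¹ * S) * G2 b + (2 * (-u) * S) * GD b) := by
        refine intervalIntegral.integral_mono_on hs.1
          (hG6cont.intervalIntegrable 0 s) ?_ hptf
        exact (((continuous_const.fun_mul hG2cont : Continuous fun b => (2 * (-u)⁻¹ * S) * G2 b)).intervalIntegrable 0 s).add
          (hGDs.const_mul _)
      have hstep2 : (∫ b in (0:ℝ)..s, ((2 * (-u)⁻¹ * S) * G2 b + (2 * (-u) * S) * GD b))
          = (2 * (-u)⁻¹ * S) * (∫ b in (0:ℝ)..s, G2 b)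
            + (2 * (-u) * S) * (∫ b in (0:ℝ)..s, GD b) := by
        rw [intervalIntegral.integral_add (((continuous_const.fun_mul hG2cont : Continuous fun b => (2 * (-u)⁻¹ * S) * G2 b)).intervalIntegrable 0 s)
          (hGDs.const_mul _), intervalIntegral.integral_const_mul,
          intervalIntegral.integral_const_mul]
      have hB' : (∫ b in (0:ℝ)..s, G2 b) ≤ B :=
        hmono G2 (hG2cont.intervalIntegrable 0 δ) hG2_nn
      have hD' : (∫ b in (0:ℝ)..s, GD b) ≤ D := hmono GD hGDint hGD_nn
      have hc2_nn : (0:ℝ) ≤ 2 * (-u)⁻¹ * S := by positivity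
      have hcD_nn : (0:ℝ) ≤ 2 * (-u) * S := by positivity
      calc (∫ b in (0:ℝ)..s, G6 b)
          ≤ (2 * (-u)⁻¹ * S) * (∫ b in (0:ℝ)..s, G2 b)
            + (2 * (-u) * S) * (∫ b in (0:ℝ)..s, GD b) := by rw [← hstep2]; exact hstep1
        _ ≤ (2 * (-u)⁻¹ * S) * B + (2 * (-u) * S) * D :=
            add_le_add (mul_le_mul_of_nonneg_left hB' hc2_nn)
              (mul_le_mul_of_nonneg_left hD' hcD_nn)
        _ = S * K := by rw [hKdef]; ring
    have hA' : (∫ b in (0:ℝ)..s, GA b) ≤ A :=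
      hmono GA (hGAcont.intervalIntegrable 0 δ) hGA_nn
    calc F s ≤ ε * (∫ b in (0:ℝ)..s, G6 b) + 4 / ε * (∫ b in (0:ℝ)..s, GA b)
          + (∫ b in (0:ℝ)..s, G4 b) := step_b
      _ ≤ ε * (S * K) + 4 / ε * A + S / 2 :=
          add_le_add (add_le_add (mul_le_mul_of_nonneg_left step_f hε.le)
            (mul_le_mul_of_nonneg_left hA' (by positivity))) step_e
  -- take sup over s
  have hgF : (∫ θ in (0:ℝ)..(2 * π), φ ub θ ^ 4 * (ub - u)) = F ub := rfl
  clear_value S K A B D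
  have hSle : ∀ ε : ℝ, 0 < ε → S ≤ ε * (S * K) + 4 / ε * A + S / 2 := by
    intro ε hε
    refine le_trans (le_of_eq hSdef) (csSup_le ⟨F 0, mem_image_of_mem F ⟨le_rfl, hδ.le⟩⟩ ?_)
    rintro y ⟨s, hs, rfl⟩
    exact hmain ε hε s hs
  have hS64 : S ≤ 64 * K * A := by
    rcases eq_or_lt_of_le hK_nn with hK0 | hKpos
    · have hS0 : S ≤ 0 := by
        by_contra hpos
        push_neg at hpos
        have hεp : 0 < (16 * A + 1) / S := by positivity
        have h9 := hSle _ hεp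
        rw [← hK0] at h9
        have h9' : S / 2 ≤ 4 / ((16 * A + 1) / S) * A := by nlinarith [h9]
        rw [div_div_eq_mul_div, div_mul_eq_mul_div] at h9'
        have hpos' : (0:ℝ) < 16 * A + 1 := by positivity
        rw [le_div_iff₀ hpos'] at h9'
        nlinarith [h9', hA_nn, hpos]
      calc S ≤ 0 := hS0
        _ ≤ 64 * K * A := by rw [← hK0]; simp
    · have hεp : 0 < 1 / (4 * K) := by positivity
      have h9 := hSle _ hεp
      have e1 : 1 / (4 * K) * (S * K) = S / 4 := by
        field_simp
      have e2 : 4 / (1 / (4 * K)) = 16 * K := by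
        rw [div_div_eq_mul_div]
        ring
      rw [e1, e2] at h9
      nlinarith [h9]
  have hF128 : (-u) * F ub ≤ 128 * A * (B + (-u) ^ (2:ℕ) * D) := by
    have h1 : F ub ≤ 64 * K * A := le_trans (hFS ub hub) hS64
    have h2 := mul_le_mul_of_nonneg_left h1 hu'.le
    have h3 : (-u) * (64 * K * A) = 128 * A * (B + (-u) ^ (2:ℕ) * D) := by
      rw [hKdef]
      field_simp [hu.ne]
      ring
    rw [h3] at h2
    exact h2
  -- rpow endgame
  have hFub_nn : 0 ≤ F ub := hF_nn ub hub
  have hsq : ∀ x : ℝ, 0 ≤ x → (Real.sqrt x) ^ ((1:ℝ)/2) = x ^ ((1:ℝ)/4) := by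
    intro x hx
    rw [Real.sqrt_eq_rpow, ← Real.rpow_mul hx]
    norm_num
  have key : (-u) ^ ((1:ℝ)/4) * (F ub) ^ ((1:ℝ)/4)
      ≤ 4 * A ^ ((1:ℝ)/4) * (B ^ ((1:ℝ)/4) + (-u) ^ ((1:ℝ)/2) * D ^ ((1:ℝ)/4)) := by
    set x := B ^ ((1:ℝ)/4) with hxdef
    set y := (-u) ^ ((1:ℝ)/2) * D ^ ((1:ℝ)/4) with hydef
    have hx : 0 ≤ x := Real.rpow_nonneg hB_nn _
    have hy : 0 ≤ y := mul_nonneg (Real.rpow_nonneg hu'.le _) (Real.rpow_nonneg hD_nn _)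
    have hx4 : x ^ (4:ℕ) = B := by
      rw [hxdef, ← Real.rpow_natCast (B ^ ((1:ℝ)/4)) 4, ← Real.rpow_mul hB_nn]
      norm_num
    have hy4 : y ^ (4:ℕ) = (-u) ^ (2:ℕ) * D := by
      rw [hydef, mul_pow, ← Real.rpow_natCast ((-u) ^ ((1:ℝ)/2)) 4, ← Real.rpow_mul hu'.le,
        ← Real.rpow_natCast (D ^ ((1:ℝ)/4)) 4, ← Real.rpow_mul hD_nn,
        ← Real.rpow_natCast (-u) 2]
      norm_num
    have hxy4 : x ^ 4 + y ^ 4 ≤ (x + y) ^ 4 := by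
      nlinarith [mul_nonneg (mul_nonneg (mul_nonneg hx hx) hx) hy,
        mul_nonneg (mul_nonneg hx hx) (mul_nonneg hy hy),
        mul_nonneg hx (mul_nonneg (mul_nonneg hy hy) hy)]
    have h256 : (-u) * F ub ≤ 256 * A * (x + y) ^ 4 := by
      have h1 : (-u) * F ub ≤ 128 * A * (x ^ 4 + y ^ 4) := by
        rw [hx4, hy4]
        exact hF128
      have h2 : 128 * A * (x ^ 4 + y ^ 4) ≤ 256 * A * (x + y) ^ 4 := by
        nlinarith [hxy4, hA_nn, pow_nonneg (add_nonneg hx hy) 4,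
          mul_le_mul_of_nonneg_left hxy4 (by positivity : (0:ℝ) ≤ 128 * A)]
      linarith
    calc (-u) ^ ((1:ℝ)/4) * (F ub) ^ ((1:ℝ)/4)
        = ((-u) * F ub) ^ ((1:ℝ)/4) := (Real.mul_rpow hu'.le hFub_nn).symm
      _ ≤ (256 * A * (x + y) ^ 4) ^ ((1:ℝ)/4) :=
          Real.rpow_le_rpow (mul_nonneg hu'.le hFub_nn) h256 (by norm_num)
      _ = 4 * A ^ ((1:ℝ)/4) * (x + y) := by
          rw [Real.mul_rpow (by positivity) (pow_nonneg (add_nonneg hx hy) 4),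
            Real.mul_rpow (by norm_num : (0:ℝ) ≤ 256) hA_nn,
            ← Real.rpow_natCast (x + y) 4, ← Real.rpow_mul (add_nonneg hx hy),
            show (256:ℝ) = 4 ^ (4:ℕ) by norm_num, ← Real.rpow_natCast (4:ℝ) 4,
            ← Real.rpow_mul (by norm_num : (0:ℝ) ≤ 4)]
          norm_num
      _ = 4 * A ^ ((1:ℝ)/4) * (B ^ ((1:ℝ)/4) + (-u) ^ ((1:ℝ)/2) * D ^ ((1:ℝ)/4)) := by
          rw [hxdef, hydef]
  -- convert the goal
  rw [hgF, hsq A hA_nn, hsq B hB_nn, hsq D hD_nn]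
  exact key
end

section
/- Let u̲ be fixed and let φ be a smooth function on the incoming truncated cone C̲_{u̲} = {(u̲, u', θ) : u₀ ≤ u' ≤ u} with u₀ ≤ u ≤ -1. Then ‖φ‖_{L²(S_{u̲,u})} ≲ ‖φ‖_{L²(S_{u̲,u₀})} + ‖L̲φ‖_{L²(C̲_{u̲})}^{1/2} ‖φ‖_{L²(C̲_{u̲})}^{1/2}. -/
open intervalIntegral
open MeasureTheory

lemma aux_sqrt_add_le (x y : ℝ) (hx : 0 ≤ x) (hy : 0 ≤ y) :
    Real.sqrt (x + y) ≤ Real.sqrt x + Real.sqrt y := by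
  have h : x + y ≤ (Real.sqrt x + Real.sqrt y) ^ 2 := by
    nlinarith [Real.sq_sqrt hx, Real.sq_sqrt hy, Real.sqrt_nonneg x, Real.sqrt_nonneg y,
      mul_nonneg (Real.sqrt_nonneg x) (Real.sqrt_nonneg y)]
  calc Real.sqrt (x + y) ≤ Real.sqrt ((Real.sqrt x + Real.sqrt y) ^ 2) := Real.sqrt_le_sqrt h
    _ = Real.sqrt x + Real.sqrt y := Real.sqrt_sq (by positivity)

lemma aux_amgm_limit (A B X : ℝ) (hA : 0 ≤ A) (hB : 0 ≤ B)
    (h : ∀ ε : ℝ, 0 < ε → X ≤ ε * A + ε⁻¹ * B) :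
    X ≤ 2 * Real.sqrt A * Real.sqrt B := by
  rcases eq_or_lt_of_le hA with hA0 | hApos
  · have hX : X ≤ 0 := by
      refine le_of_forall_pos_le_add fun c hc => ?_
      have := h ((B + 1) / c) (by positivity)
      have hle : ((B + 1) / c)⁻¹ * B ≤ c := by
        rw [inv_div]
        rw [div_mul_eq_mul_div, div_le_iff₀ (by positivity)]
        nlinarith
      rw [← hA0] at this
      simp only [mul_zero, zero_add] at this
      simpa using this.trans hle
    have : 0 ≤ 2 * Real.sqrt A * Real.sqrt B := by positivity
    linarith
  · rcases eq_or_lt_of_le hB with hB0 | hBpos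
    · have hX : X ≤ 0 := by
        refine le_of_forall_pos_le_add fun c hc => ?_
        have := h (c / (A + 1)) (by positivity)
        rw [← hB0] at this
        simp only [mul_zero, add_zero] at this
        have hle : c / (A + 1) * A ≤ c := by
          rw [div_mul_eq_mul_div, div_le_iff₀ (by positivity)]
          nlinarith
        simpa using this.trans hle
      have : 0 ≤ 2 * Real.sqrt A * Real.sqrt B := by positivity
      linarith
    · set sa := Real.sqrt A with hsa
      set sb := Real.sqrt B with hsb
      have hsa2 : sa ^ 2 = A := Real.sq_sqrt hA
      have hsb2 : sb ^ 2 = B := Real.sq_sqrt hB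
      have hsap : 0 < sa := Real.sqrt_pos.mpr hApos
      have hsbp : 0 < sb := Real.sqrt_pos.mpr hBpos
      have := h (sb / sa) (by positivity)
      have heq : sb / sa * A + (sb / sa)⁻¹ * B = 2 * sa * sb := by
        rw [inv_div]
        field_simp
        nlinarith
      linarith [heq ▸ this]

lemma aux_fubini (a b c d : ℝ) (hab : a ≤ b) (hcd : c ≤ d)
    (f : ℝ → ℝ → ℝ) (hf : Continuous fun p : ℝ × ℝ => f p.1 p.2) :
    (∫ x in a..b, ∫ y in c..d, f x y) = ∫ y in c..d, ∫ x in a..b, f x y := by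
  rw [intervalIntegral.integral_of_le hab, intervalIntegral.integral_of_le hcd]
  simp_rw [intervalIntegral.integral_of_le hcd, intervalIntegral.integral_of_le hab]
  apply MeasureTheory.integral_integral_swap
  rw [Measure.prod_restrict]
  have hint : IntegrableOn (Function.uncurry f) (Set.Icc a b ×ˢ Set.Icc c d) volume := by
    exact (hf.continuousOn).integrableOn_compact (isCompact_Icc.prod isCompact_Icc)
  exact hint.mono_set (Set.prod_mono Set.Ioc_subset_Icc_self Set.Ioc_subset_Icc_self)

/-- L² Sobolev trace inequality on the truncated incoming cone `C̲_{u̲}`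
(part of Proposition 3.2):
`‖φ‖_{L²(S_{u̲,u})} ≲ ‖φ‖_{L²(S_{u̲,u₀})} + ‖L̲φ‖_{L²(C̲_{u̲})}^{1/2} ‖φ‖_{L²(C̲_{u̲})}^{1/2}`.
The cone is parametrized by `(u', θ) ∈ [u₀,u] × [0,2π]` with circle radius
`r(u') = u̲ - u'`, measure `r du' dθ`, and `L̲ = ∂_{u'}` at fixed `θ`. -/
theorem incoming_cone_L2_trace :
    ∃ C : ℝ, 0 < C ∧ ∀ (ub u₀ u : ℝ), 0 ≤ ub → u₀ ≤ u → u ≤ -1 →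
      ∀ φ : ℝ → ℝ → ℝ,
        ContDiff ℝ (⊤ : ℕ∞) (fun p : ℝ × ℝ => φ p.1 p.2) →
        (∀ v, Function.Periodic (fun θ => φ v θ) (2 * Real.pi)) →
        Real.sqrt (∫ θ in (0 : ℝ)..(2 * Real.pi), φ u θ ^ 2 * (ub - u)) ≤
          C * (Real.sqrt (∫ θ in (0 : ℝ)..(2 * Real.pi), φ u₀ θ ^ 2 * (ub - u₀)) +
            (Real.sqrt (∫ v in u₀..u, ∫ θ in (0 : ℝ)..(2 * Real.pi),
                (deriv (fun s => φ s θ) v) ^ 2 * (ub - v))) ^ ((1 : ℝ) / 2) *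
              (Real.sqrt (∫ v in u₀..u, ∫ θ in (0 : ℝ)..(2 * Real.pi),
                φ v θ ^ 2 * (ub - v))) ^ ((1 : ℝ) / 2)) := by
  refine ⟨2, by norm_num, fun ub u₀ u hub hu₀u hu φ hφ _ => ?_⟩
  have hpi : (0 : ℝ) ≤ 2 * Real.pi := by positivity
  set Φ : ℝ × ℝ → ℝ := fun p => φ p.1 p.2 with hΦdef
  set D : ℝ → ℝ → ℝ := fun v θ => fderiv ℝ Φ (v, θ) (1, 0) with hDdef
  have hΦc : Continuous Φ := hφ.continuous
  have hDc : Continuous fun p : ℝ × ℝ => D p.1 p.2 :=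
    (hφ.continuous_fderiv (by simp)).clm_apply continuous_const
  -- pointwise derivative in v
  have hder : ∀ θ v, HasDerivAt (fun s => φ s θ) (D v θ) v := by
    intro θ v
    have h1 : HasFDerivAt Φ (fderiv ℝ Φ (v, θ)) (v, θ) :=
      (hφ.differentiable (by simp) (v, θ)).hasFDerivAt
    have h2 : HasDerivAt (fun s : ℝ => ((s, θ) : ℝ × ℝ)) ((1 : ℝ), (0 : ℝ)) v :=
      (hasDerivAt_id v).prodMk (hasDerivAt_const v θ)
    exact h1.comp_hasDerivAt v h2
  have hrw : ∀ θ v, deriv (fun s => φ s θ) v = D v θ := fun θ v => (hder θ v).deriv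
  simp only [hrw]
  set A : ℝ := ∫ v in u₀..u, ∫ θ in (0:ℝ)..(2*Real.pi), D v θ ^ 2 * (ub - v) with hAdef
  set B : ℝ := ∫ v in u₀..u, ∫ θ in (0:ℝ)..(2*Real.pi), φ v θ ^ 2 * (ub - v) with hBdef
  set F : ℝ → ℝ := fun v => ∫ θ in (0:ℝ)..(2*Real.pi), φ v θ ^ 2 * (ub - v) with hFdef
  have cA : Continuous fun p : ℝ × ℝ => D p.1 p.2 ^ 2 * (ub - p.1) := by fun_prop
  have cB : Continuous fun p : ℝ × ℝ => Φ p ^ 2 * (ub - p.1) := by fun_prop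
  have cd : Continuous fun p : ℝ × ℝ =>
      2 * Φ p * D p.1 p.2 * (ub - p.1) - Φ p ^ 2 := by fun_prop
  have hwnn : ∀ v ∈ Set.Icc u₀ u, (0:ℝ) ≤ ub - v := by
    intro v hv
    have := hv.2
    linarith
  have hInnerA : ∀ v ∈ Set.Icc u₀ u,
      (0:ℝ) ≤ ∫ θ in (0:ℝ)..(2*Real.pi), D v θ ^ 2 * (ub - v) := by
    intro v hv
    apply intervalIntegral.integral_nonneg hpi
    intro θ _
    exact mul_nonneg (sq_nonneg _) (hwnn v hv)
  have hInnerB : ∀ v ∈ Set.Icc u₀ u,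
      (0:ℝ) ≤ ∫ θ in (0:ℝ)..(2*Real.pi), φ v θ ^ 2 * (ub - v) := by
    intro v hv
    apply intervalIntegral.integral_nonneg hpi
    intro θ _
    exact mul_nonneg (sq_nonneg _) (hwnn v hv)
  have hA0 : 0 ≤ A := intervalIntegral.integral_nonneg hu₀u hInnerA
  have hB0 : 0 ≤ B := intervalIntegral.integral_nonneg hu₀u hInnerB
  have hF0 : ∀ v ∈ Set.Icc u₀ u, 0 ≤ F v := hInnerB
  have key : ∀ ε : ℝ, 0 < ε → F u ≤ F u₀ + (ε * A + ε⁻¹ * B) := by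
    intro ε hε
    -- section continuity helpers
    have csecθ : ∀ v : ℝ, Continuous fun θ : ℝ =>
        2 * φ v θ * D v θ * (ub - v) - φ v θ ^ 2 := by
      intro v
      exact cd.comp (continuous_const.prodMk continuous_id)
    have csecv : ∀ θ : ℝ, Continuous fun v : ℝ =>
        2 * φ v θ * D v θ * (ub - v) - φ v θ ^ 2 := by
      intro θ
      exact cd.comp (continuous_id.prodMk continuous_const)
    have cArow : ∀ v : ℝ, Continuous fun θ : ℝ => D v θ ^ 2 * (ub - v) := by
      intro v
      exact cA.comp (continuous_const.prodMk continuous_id)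
    have cBrow : ∀ v : ℝ, Continuous fun θ : ℝ => φ v θ ^ 2 * (ub - v) := by
      intro v
      exact cB.comp (continuous_const.prodMk continuous_id)
    have cBcol : ∀ θ : ℝ, Continuous fun v : ℝ => φ v θ ^ 2 * (ub - v) := by
      intro θ
      exact cB.comp (continuous_id.prodMk continuous_const)
    -- FTC in the v variable, for each θ
    have hftc : ∀ θ : ℝ,
        (∫ v in u₀..u, (2 * φ v θ * D v θ * (ub - v) - φ v θ ^ 2))
          = φ u θ ^ 2 * (ub - u) - φ u₀ θ ^ 2 * (ub - u₀) := by
      intro θ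
      apply intervalIntegral.integral_eq_sub_of_hasDerivAt
      · intro v _
        have h1 := (hder θ v).fun_pow 2
        have h2 : HasDerivAt (fun s : ℝ => ub - s) (-1) v := by
          simpa using (hasDerivAt_id' (x := v)).const_sub ub
        have h3 := h1.fun_mul h2
        refine h3.congr_deriv ?_
        push_cast
        ring
      · exact (csecv θ).intervalIntegrable _ _
    -- F u - F u₀ as a double integral
    have hsub : F u - F u₀ =
        ∫ θ in (0:ℝ)..(2*Real.pi),
          ∫ v in u₀..u, (2 * φ v θ * D v θ * (ub - v) - φ v θ ^ 2) := by
      rw [show (∫ θ in (0:ℝ)..(2*Real.pi),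
          ∫ v in u₀..u, (2 * φ v θ * D v θ * (ub - v) - φ v θ ^ 2))
          = ∫ θ in (0:ℝ)..(2*Real.pi),
            (φ u θ ^ 2 * (ub - u) - φ u₀ θ ^ 2 * (ub - u₀)) from
        intervalIntegral.integral_congr fun θ _ => hftc θ]
      rw [intervalIntegral.integral_sub ((cBrow u).intervalIntegrable _ _)
        ((cBrow u₀).intervalIntegrable _ _)]
    -- Fubini
    have hfub : (∫ θ in (0:ℝ)..(2*Real.pi),
          ∫ v in u₀..u, (2 * φ v θ * D v θ * (ub - v) - φ v θ ^ 2))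
        = ∫ v in u₀..u, ∫ θ in (0:ℝ)..(2*Real.pi),
            (2 * φ v θ * D v θ * (ub - v) - φ v θ ^ 2) := by
      apply aux_fubini 0 (2*Real.pi) u₀ u hpi hu₀u
        (fun θ v => 2 * φ v θ * D v θ * (ub - v) - φ v θ ^ 2)
      exact cd.comp (continuous_snd.prodMk continuous_fst)
    -- pointwise bound and integration
    have hptw : ∀ v ∈ Set.Icc u₀ u, ∀ θ : ℝ,
        2 * φ v θ * D v θ * (ub - v) - φ v θ ^ 2 ≤
          ε * (D v θ ^ 2 * (ub - v)) + ε⁻¹ * (φ v θ ^ 2 * (ub - v)) := by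
      intro v hv θ
      have hw := hwnn v hv
      have h1 : 0 ≤ (ub - v) * (ε * D v θ - φ v θ) ^ 2 := mul_nonneg hw (sq_nonneg _)
      have h2 : ε * ε⁻¹ = 1 := mul_inv_cancel₀ hε.ne'
      have h4 : ε * (D v θ ^ 2 * (ub - v)) + ε⁻¹ * (φ v θ ^ 2 * (ub - v))
          - (2 * φ v θ * D v θ * (ub - v) - φ v θ ^ 2)
          = ε⁻¹ * ((ub - v) * (ε * D v θ - φ v θ) ^ 2) + φ v θ ^ 2 := by
        field_simp
        ring
      have h5 : 0 ≤ ε⁻¹ * ((ub - v) * (ε * D v θ - φ v θ) ^ 2) :=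
        mul_nonneg (inv_nonneg.mpr hε.le) h1
      have h3 : 0 ≤ φ v θ ^ 2 := sq_nonneg _
      linarith
    have hmono : (∫ v in u₀..u, ∫ θ in (0:ℝ)..(2*Real.pi),
            (2 * φ v θ * D v θ * (ub - v) - φ v θ ^ 2))
        ≤ ∫ v in u₀..u, ∫ θ in (0:ℝ)..(2*Real.pi),
            (ε * (D v θ ^ 2 * (ub - v)) + ε⁻¹ * (φ v θ ^ 2 * (ub - v))) := by
      apply intervalIntegral.integral_mono_on hu₀u
      · apply Continuous.intervalIntegrable
        apply intervalIntegral.continuous_parametric_intervalIntegral_of_continuous'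
        exact cd
      · apply Continuous.intervalIntegrable
        apply intervalIntegral.continuous_parametric_intervalIntegral_of_continuous'
        show Continuous fun p : ℝ × ℝ =>
          ε * (D p.1 p.2 ^ 2 * (ub - p.1)) + ε⁻¹ * (Φ p ^ 2 * (ub - p.1))
        fun_prop
      · intro v hv
        apply intervalIntegral.integral_mono_on hpi
        · exact (csecθ v).intervalIntegrable _ _
        · apply Continuous.intervalIntegrable
          exact (continuous_const.mul (cArow v)).add (continuous_const.mul (cBrow v))
        · intro θ _
          exact hptw v hv θ
    -- identify the right-hand side with ε * A + ε⁻¹ * B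
    have hsplit : (∫ v in u₀..u, ∫ θ in (0:ℝ)..(2*Real.pi),
            (ε * (D v θ ^ 2 * (ub - v)) + ε⁻¹ * (φ v θ ^ 2 * (ub - v))))
        = ε * A + ε⁻¹ * B := by
      have hinner : ∀ v : ℝ, (∫ θ in (0:ℝ)..(2*Real.pi),
            (ε * (D v θ ^ 2 * (ub - v)) + ε⁻¹ * (φ v θ ^ 2 * (ub - v))))
          = ε * (∫ θ in (0:ℝ)..(2*Real.pi), D v θ ^ 2 * (ub - v))
            + ε⁻¹ * (∫ θ in (0:ℝ)..(2*Real.pi), φ v θ ^ 2 * (ub - v)) := by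
        intro v
        rw [intervalIntegral.integral_add (f := fun θ => ε * (D v θ ^ 2 * (ub - v)))
          (g := fun θ => ε⁻¹ * (φ v θ ^ 2 * (ub - v)))
          ((continuous_const.mul (cArow v)).intervalIntegrable _ _)
          ((continuous_const.mul (cBrow v)).intervalIntegrable _ _),
          intervalIntegral.integral_const_mul, intervalIntegral.integral_const_mul]
      simp only [hinner]
      rw [intervalIntegral.integral_add, intervalIntegral.integral_const_mul,
        intervalIntegral.integral_const_mul]
      · apply Continuous.intervalIntegrable
        apply continuous_const.mul
        apply intervalIntegral.continuous_parametric_intervalIntegral_of_continuous'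
        exact cA
      · apply Continuous.intervalIntegrable
        apply continuous_const.mul
        apply intervalIntegral.continuous_parametric_intervalIntegral_of_continuous'
        exact cB
    have := hsub.symm ▸ (hfub ▸ (hsplit ▸ hmono))
    linarith [hsub, hfub, hsplit, hmono]
  have hmain : F u ≤ F u₀ + 2 * Real.sqrt A * Real.sqrt B := by
    have := aux_amgm_limit A B (F u - F u₀) hA0 hB0 (fun ε hε => by linarith [key ε hε])
    linarith
  have h1 : Real.sqrt (F u) ≤ Real.sqrt (F u₀) + Real.sqrt (2 * Real.sqrt A * Real.sqrt B) := by
    calc Real.sqrt (F u) ≤ Real.sqrt (F u₀ + 2 * Real.sqrt A * Real.sqrt B) :=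
          Real.sqrt_le_sqrt hmain
      _ ≤ _ := aux_sqrt_add_le _ _ (hF0 u₀ ⟨le_refl _, hu₀u⟩) (by positivity)
  have h2 : Real.sqrt (2 * Real.sqrt A * Real.sqrt B) ≤
      2 * ((Real.sqrt A) ^ ((1:ℝ)/2) * (Real.sqrt B) ^ ((1:ℝ)/2)) := by
    rw [Real.sqrt_mul (by positivity), Real.sqrt_mul (by norm_num : (0:ℝ) ≤ 2)]
    rw [Real.sqrt_eq_rpow (Real.sqrt A), Real.sqrt_eq_rpow (Real.sqrt B)]
    have hs2 : Real.sqrt 2 ≤ 2 := by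
      nlinarith [Real.sq_sqrt (show (0:ℝ) ≤ 2 by norm_num), Real.sqrt_nonneg 2]
    have hx : (0:ℝ) ≤ (Real.sqrt A) ^ ((1:ℝ)/2) := Real.rpow_nonneg (Real.sqrt_nonneg A) _
    have hy : (0:ℝ) ≤ (Real.sqrt B) ^ ((1:ℝ)/2) := Real.rpow_nonneg (Real.sqrt_nonneg B) _
    nlinarith [mul_nonneg hx hy]
  have hFu : Real.sqrt (F u) ≤
      2 * (Real.sqrt (F u₀) + (Real.sqrt A) ^ ((1:ℝ)/2) * (Real.sqrt B) ^ ((1:ℝ)/2)) := by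
    have h3 : 0 ≤ Real.sqrt (F u₀) := Real.sqrt_nonneg _
    nlinarith [h1, h2]
  exact hFu
end
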